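/- For the ASEP generator acting on the exponential of the height function at a fixed site, one has the discrete Hopf–Cole identity: for every height configuration ξ ∈ Ω_{N,k} and every x ∈ {1,...,N-1}, L_{N,k}(ζ_x)(ξ) = √(pq) · Δ(λ^{ξ(·)/2})(x) − ϱ λ^{ξ(x)/2}, where ζ_x(ξ) = λ^{ξ(x)/2}, Δ is the discrete Laplacian in x, ϱ = (√p − √q)², and λ = p/q. -/
import Mathlib

lemma asep_key_identity (p q s : ℝ) (hp0 : 0 < p) (hq0 : 0 < q)
    (hs : s = Real.sqrt p / Real.sqrt q)
    (a b c : ℤ) (hb : b = a + 1 ∨ b = a - 1) (hc : c = a + 1 ∨ c = a - 1) :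
    p * (s ^ (max b c - 1) - s ^ a) + q * (s ^ (min b c + 1) - s ^ a)
      = Real.sqrt (p * q) * (s ^ b - 2 * s ^ a + s ^ c)
        - (Real.sqrt p - Real.sqrt q) ^ 2 * s ^ a := by
  have hsp : Real.sqrt p * Real.sqrt p = p := Real.mul_self_sqrt hp0.le
  have hsq : Real.sqrt q * Real.sqrt q = q := Real.mul_self_sqrt hq0.le
  have hspq : Real.sqrt (p * q) = Real.sqrt p * Real.sqrt q := Real.sqrt_mul hp0.le q
  have hsqpos : 0 < Real.sqrt q := Real.sqrt_pos.mpr hq0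
  have hsppos : 0 < Real.sqrt p := Real.sqrt_pos.mpr hp0
  have hs0 : 0 < s := by rw [hs]; positivity
  have hsne : s ≠ 0 := hs0.ne'
  have E1 : s ^ (a + 1) = s ^ a * s := by rw [zpow_add_one₀ hsne]
  have E2 : s ^ (a - 1) = s ^ a / s := by rw [zpow_sub_one₀ hsne]; ring
  have E3 : s ^ (a + 2) = s ^ a * (s * s) := by
    rw [show (a + 2 : ℤ) = a + 1 + 1 by ring, zpow_add_one₀ hsne, zpow_add_one₀ hsne]; ring
  have E4 : s ^ (a - 2) = s ^ a / (s * s) := by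
    rw [show (a - 2 : ℤ) = a - 1 - 1 by ring, zpow_sub_one₀ hsne, zpow_sub_one₀ hsne]; ring
  rcases hb with hb | hb <;> rcases hc with hc | hc <;> rw [hb, hc]
  · rw [max_self, min_self, show (a + 1 - 1 : ℤ) = a by ring,
      show (a + 1 + 1 : ℤ) = a + 2 by ring, E1, E3, hspq]
    set sp := Real.sqrt p with hspdef
    set sq := Real.sqrt q with hsqdef
    rw [hs, ← hsp, ← hsq]
    field_simp
    ring
  · rw [show max (a+1) (a-1) = a + 1 by omega, show min (a+1) (a-1) = a - 1 by omega,
      show (a + 1 - 1 : ℤ) = a by ring, show (a - 1 + 1 : ℤ) = a by ring, E1, E2, hspq]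
    set sp := Real.sqrt p with hspdef
    set sq := Real.sqrt q with hsqdef
    rw [hs, ← hsp, ← hsq]
    field_simp
    ring
  · rw [show max (a-1) (a+1) = a + 1 by omega, show min (a-1) (a+1) = a - 1 by omega,
      show (a + 1 - 1 : ℤ) = a by ring, show (a - 1 + 1 : ℤ) = a by ring, E1, E2, hspq]
    set sp := Real.sqrt p with hspdef
    set sq := Real.sqrt q with hsqdef
    rw [hs, ← hsp, ← hsq]
    field_simp
    ring
  · rw [max_self, min_self, show (a - 1 - 1 : ℤ) = a - 2 by ring,
      show (a - 1 + 1 : ℤ) = a by ring, E2, E4, hspq]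
    set sp := Real.sqrt p with hspdef
    set sq := Real.sqrt q with hsqdef
    rw [hs, ← hsp, ← hsq]
    field_simp
    ring

/-- Discrete Hopf–Cole identity: for a height function `ξ ∈ Ω_{N,k}` and an interior
site `x`, the ASEP generator applied to `ζ_x(ξ) = λ^{ξ(x)/2} = (√λ)^{ξ(x)}` satisfies
`L_{N,k} ζ_x (ξ) = √(pq) Δ((√λ)^{ξ(·)})(x) − ϱ (√λ)^{ξ(x)}`. The flipped configurations
`ξ_y` and `ξ^y` are written with `Function.update`. -/
theorem asep_hopf_cole_identity
    (N k : ℕ) (hN : 2 ≤ N) (hk1 : 1 ≤ k) (hkN : k ≤ N - 1)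
    (p q lam ρ : ℝ) (hp : 1/2 < p) (hp1 : p < 1) (hq : q = 1 - p)
    (hlam : lam = p / q) (hρ : ρ = (Real.sqrt p - Real.sqrt q) ^ 2)
    (ξ : ℕ → ℤ) (hξ0 : ξ 0 = 0) (hξN : ξ N = 2 * (k : ℤ) - (N : ℤ))
    (hstep : ∀ x < N, |ξ (x + 1) - ξ x| = 1)
    (x : ℕ) (hx1 : 1 ≤ x) (hx : x ≤ N - 1) :
    (∑ y ∈ Finset.Icc 1 (N - 1),
        (p * (Real.sqrt lam ^ ((Function.update ξ y (max (ξ (y + 1)) (ξ (y - 1)) - 1)) x)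
              - Real.sqrt lam ^ (ξ x))
         + q * (Real.sqrt lam ^ ((Function.update ξ y (min (ξ (y + 1)) (ξ (y - 1)) + 1)) x)
              - Real.sqrt lam ^ (ξ x))))
      = Real.sqrt (p * q) *
          (Real.sqrt lam ^ (ξ (x + 1)) - 2 * Real.sqrt lam ^ (ξ x)
            + Real.sqrt lam ^ (ξ (x - 1)))
        - ρ * Real.sqrt lam ^ (ξ x) := by
  have hp0 : (0:ℝ) < p := by linarith
  have hq0 : (0:ℝ) < q := by rw [hq]; linarith
  have hmem : x ∈ Finset.Icc 1 (N - 1) := Finset.mem_Icc.mpr ⟨hx1, hx⟩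
  rw [Finset.sum_eq_single_of_mem x hmem (by
    intro y _ hyx
    rw [Function.update_of_ne hyx.symm, Function.update_of_ne hyx.symm]
    ring)]
  simp only [Function.update_self]
  have h1 := hstep x (by omega)
  have h2 := hstep (x - 1) (by omega)
  rw [show x - 1 + 1 = x by omega] at h2
  have hb : ξ (x + 1) = ξ x + 1 ∨ ξ (x + 1) = ξ x - 1 := by
    rcases (abs_eq (by norm_num : (0:ℤ) ≤ 1)).mp h1 with h | h
    · left; omega
    · right; omega
  have hc : ξ (x - 1) = ξ x + 1 ∨ ξ (x - 1) = ξ x - 1 := by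
    rcases (abs_eq (by norm_num : (0:ℤ) ≤ 1)).mp h2 with h | h
    · right; omega
    · left; omega
  have hs : Real.sqrt lam = Real.sqrt p / Real.sqrt q := by
    rw [hlam, Real.sqrt_div hp0.le]
  rw [hρ]
  exact asep_key_identity p q (Real.sqrt lam) hp0 hq0 hs (ξ x) (ξ (x+1)) (ξ (x-1)) hb hc
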